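/- arXiv:2604.12842 — 4 statements merged into one kernel-verified Lean document; each statement's English description precedes it below -/
import Mathlib

section
/- Let N ≥ 1, k a commutative ring, q ∈ k a unit, and let (L⁺, L⁻) be a quantized-enveloping pair over a unital associative k-algebra A. Set ℒ = L⁺ (L⁻)^{-1}, an N×N matrix over A. Then ℒ satisfies the reflection equation R ℒ₁ R₂₁ ℒ₂ = ℒ₂ R ℒ₁ R₂₁ in End(k^N) ⊗ End(k^N) ⊗ A, where R₂₁ = P R P. (This is the defining relation (1.4) of the reflection equation algebra O_h(Mat_N), so the entries of ℒ realize O_h(Mat_N) inside A; this underlies Theorem 4.5 of the paper.) -/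
/-! Conjugating the RLL relations by the flip of the two tensor legs gives relations for
`R₂₁ = P R P` with the legs exchanged. The reflection equation for `ℒ = L⁺ (L⁻)⁻¹` is then a
formal consequence, valid in any monoid, of `R L⁺₁ L⁺₂ = L⁺₂ L⁺₁ R`, `R L⁺₁ L⁻₂ = L⁻₂ L⁺₁ R` and
the flipped relations `R₂₁ L⁻₂ L⁻₁ = L⁻₁ L⁻₂ R₂₁`, `R₂₁ L⁺₂ L⁻₁ = L⁻₁ L⁺₂ R₂₁`: they let the
inverses `(L⁻ᵢ)⁻¹` and the factors `L⁺ᵢ` be moved past `R` and `R₂₁` one at a time. -/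

open Matrix Kronecker

namespace QVA

/-- The matrix unit `e_{ij}` of `End(k^N)`. -/
def eMat (k : Type*) [Semiring k] {N : ℕ} (i j : Fin N) : Matrix (Fin N) (Fin N) k :=
  Matrix.single i j 1

/-- The permutation operator `P = ∑_{i,j} e_{ij} ⊗ e_{ji}` in `End(k^N) ⊗ End(k^N)`. -/
def Pmat (k : Type*) [Semiring k] (N : ℕ) : Matrix (Fin N × Fin N) (Fin N × Fin N) k :=
  ∑ i : Fin N, ∑ j : Fin N, eMat k i j ⊗ₖ eMat k j i

/-- The quantum `R`-matrix of type `gl_N`; `qi` stands for `q⁻¹`. -/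
def Rmat (k : Type*) [Ring k] (N : ℕ) (q qi : k) :
    Matrix (Fin N × Fin N) (Fin N × Fin N) k :=
  q • (∑ i : Fin N, eMat k i i ⊗ₖ eMat k i i)
    + (∑ i : Fin N, ∑ j : Fin N, if i ≠ j then eMat k i i ⊗ₖ eMat k j j else 0)
    + (q - qi) • (∑ i : Fin N, ∑ j : Fin N, if i < j then eMat k i j ⊗ₖ eMat k j i else 0)

/-- The explicit inverse of the quantum `R`-matrix. -/
def RmatInv (k : Type*) [Ring k] (N : ℕ) (q qi : k) :
    Matrix (Fin N × Fin N) (Fin N × Fin N) k :=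
  qi • (∑ i : Fin N, eMat k i i ⊗ₖ eMat k i i)
    + (∑ i : Fin N, ∑ j : Fin N, if i ≠ j then eMat k i i ⊗ₖ eMat k j j else 0)
    - (q - qi) • (∑ i : Fin N, ∑ j : Fin N, if i < j then eMat k i j ⊗ₖ eMat k j i else 0)

/-- Place a one-leg matrix `X` in the tensor leg `a` of the `n`-fold tensor power
`End(k^N)^{⊗ n}` (with entries in `A`), modelled as matrices indexed by `Fin n → Fin N`. -/
def leg1 {A : Type*} [Zero A] {N : ℕ} (n : ℕ) (a : Fin n)
    (X : Matrix (Fin N) (Fin N) A) : Matrix (Fin n → Fin N) (Fin n → Fin N) A :=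
  Matrix.of fun f g => if ∀ c, c ≠ a → f c = g c then X (f a) (g a) else 0

/-- Place a two-leg matrix `X` in the tensor legs `(a, b)`. -/
def leg2 {A : Type*} [Zero A] {N : ℕ} (n : ℕ) (a b : Fin n)
    (X : Matrix (Fin N × Fin N) (Fin N × Fin N) A) :
    Matrix (Fin n → Fin N) (Fin n → Fin N) A :=
  Matrix.of fun f g =>
    if ∀ c, c ≠ a → c ≠ b → f c = g c then X (f a, f b) (g a, g b) else 0

/-- Ordered product of a list of elements (`→∏` when the list is increasing,
`←∏` when it is decreasing). -/
def ordProd {M ι : Type*} [Monoid M] (l : List ι) (f : ι → M) : M := (l.map f).prod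

/-- `(Lp, Lm)` (with `LmInv` a two-sided inverse of `Lm`) is a quantized-enveloping
pair over the unital associative `k`-algebra `A`, i.e. it satisfies the defining
relations (1.2) of the quantized enveloping algebra `U_h(gl_N)`. -/
def IsQEPair (k : Type*) [CommRing k] (N : ℕ) (q qi : k)
    (A : Type*) [Ring A] [Algebra k A]
    (Lp Lm LmInv : Matrix (Fin N) (Fin N) A) : Prop :=
  (∀ i j : Fin N, j < i → Lp i j = 0) ∧
  (∀ i j : Fin N, i < j → Lm i j = 0) ∧
  Lm * LmInv = 1 ∧
  LmInv * Lm = 1 ∧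
  (∀ i : Fin N, Lp i i * Lm i i = Lm i i * Lp i i) ∧
  (leg2 2 0 1 ((Rmat k N q qi).map (algebraMap k A)) * leg1 2 0 Lp * leg1 2 1 Lp
      = leg1 2 1 Lp * leg1 2 0 Lp * leg2 2 0 1 ((Rmat k N q qi).map (algebraMap k A))) ∧
  (leg2 2 0 1 ((Rmat k N q qi).map (algebraMap k A)) * leg1 2 0 Lm * leg1 2 1 Lm
      = leg1 2 1 Lm * leg1 2 0 Lm * leg2 2 0 1 ((Rmat k N q qi).map (algebraMap k A))) ∧
  (leg2 2 0 1 ((Rmat k N q qi).map (algebraMap k A)) * leg1 2 0 Lp * leg1 2 1 Lm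
      = leg1 2 1 Lm * leg1 2 0 Lp * leg2 2 0 1 ((Rmat k N q qi).map (algebraMap k A)))

theorem Pmat_eq_toMatrix (k : Type*) [Semiring k] (N : ℕ) :
    Pmat k N = (Equiv.prodComm (Fin N) (Fin N)).toPEquiv.toMatrix := by
  ext ⟨a, b⟩ ⟨c, d⟩
  simp only [Pmat, eMat, single_kronecker_single, mul_one, Matrix.sum_apply, Matrix.single_apply,
    Prod.mk.injEq, PEquiv.toMatrix_apply]
  rw [Finset.sum_eq_single a (fun i _ hi => by simp [hi]) (by simp),
    Finset.sum_eq_single b (fun j _ hj => by simp [hj]) (by simp)]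
  simp [and_comm]

theorem Pmat_mul_mul_Pmat {k : Type*} [Semiring k] {N : ℕ}
    (X : Matrix (Fin N × Fin N) (Fin N × Fin N) k) :
    Pmat k N * X * Pmat k N = X.submatrix Prod.swap Prod.swap := by
  rw [Pmat_eq_toMatrix, PEquiv.toMatrix_toPEquiv_mul, PEquiv.mul_toMatrix_toPEquiv]
  rfl

section Legs

variable {A : Type*} {N n : ℕ}

theorem leg2_submatrix_swap [Zero A] (a b : Fin n)
    (X : Matrix (Fin N × Fin N) (Fin N × Fin N) A) :
    leg2 n a b (X.submatrix Prod.swap Prod.swap) = leg2 n b a X := by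
  ext f g
  simp only [leg2, of_apply, submatrix_apply, Prod.swap_prod_mk]
  grind

theorem leg1_eq_reindex_blockDiagonal [Zero A] (a : Fin n) (X : Matrix (Fin N) (Fin N) A) :
    leg1 n a X = reindex (Equiv.funSplitAt a (Fin N)).symm (Equiv.funSplitAt a (Fin N)).symm
      (blockDiagonal fun _ => X) := by
  ext f g
  simp [leg1, blockDiagonal_apply, funext_iff]

theorem leg1_mul [Semiring A] (a : Fin n) (X Y : Matrix (Fin N) (Fin N) A) :
    leg1 n a (X * Y) = leg1 n a X * leg1 n a Y := by
  simp only [leg1_eq_reindex_blockDiagonal, reindex_apply, submatrix_mul_equiv,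
    ← blockDiagonal_mul]

theorem leg1_one [Semiring A] (a : Fin n) : leg1 n a (1 : Matrix (Fin N) (Fin N) A) = 1 := by
  rw [leg1_eq_reindex_blockDiagonal, ← Pi.one_def, blockDiagonal_one, reindex_apply,
    submatrix_one_equiv]

/-- Relabelling of the tensor legs: `permLegs σ M` has entries `M (f ∘ σ) (g ∘ σ)`. -/
def permLegs [Semiring A] (σ : Equiv.Perm (Fin n)) :
    Matrix (Fin n → Fin N) (Fin n → Fin N) A ≃+* Matrix (Fin n → Fin N) (Fin n → Fin N) A :=
  reindexRingEquiv A (σ.arrowCongr (Equiv.refl (Fin N)))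

theorem permLegs_leg1 [Semiring A] (σ : Equiv.Perm (Fin n)) (a : Fin n)
    (X : Matrix (Fin N) (Fin N) A) :
    permLegs σ (leg1 n a X) = leg1 n (σ a) X := by
  ext f g
  simp only [permLegs, coe_reindexRingEquiv, reindex_apply, leg1, of_apply, submatrix_apply,
    Equiv.arrowCongr_symm, Equiv.arrowCongr_apply, Equiv.refl_symm, Equiv.coe_refl,
    Function.comp_apply, id_eq, Equiv.symm_symm]
  refine if_congr ?_ rfl rfl
  conv_rhs => rw [← σ.forall_congr_right]
  simp

theorem permLegs_leg2 [Semiring A] (σ : Equiv.Perm (Fin n)) (a b : Fin n)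
    (X : Matrix (Fin N × Fin N) (Fin N × Fin N) A) :
    permLegs σ (leg2 n a b X) = leg2 n (σ a) (σ b) X := by
  ext f g
  simp only [permLegs, coe_reindexRingEquiv, reindex_apply, leg2, of_apply, submatrix_apply,
    Equiv.arrowCongr_symm, Equiv.arrowCongr_apply, Equiv.refl_symm, Equiv.coe_refl,
    Function.comp_apply, id_eq, Equiv.symm_symm]
  refine if_congr ?_ rfl rfl
  conv_rhs => rw [← σ.forall_congr_right]
  simp

end Legs

theorem reflection_equation_of_rll {M : Type*} [Monoid M] (R R₂₁ Lp₁ Lp₂ : M) (Lm₁ Lm₂ : Mˣ)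
    (hpp : R * Lp₁ * Lp₂ = Lp₂ * Lp₁ * R)
    (hpm : R * Lp₁ * Lm₂ = Lm₂ * Lp₁ * R)
    (hmm₂₁ : R₂₁ * Lm₂ * Lm₁ = Lm₁ * Lm₂ * R₂₁)
    (hpm₂₁ : R₂₁ * Lp₂ * Lm₁ = Lm₁ * Lp₂ * R₂₁) :
    R * (Lp₁ * ↑Lm₁⁻¹) * R₂₁ * (Lp₂ * ↑Lm₂⁻¹) = Lp₂ * ↑Lm₂⁻¹ * R * (Lp₁ * ↑Lm₁⁻¹) * R₂₁ := by
  have e₁ : ↑Lm₁⁻¹ * (R₂₁ * Lp₂) = Lp₂ * R₂₁ * ↑Lm₁⁻¹ :=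
    SemiconjBy.units_inv_symm_left (by simpa [SemiconjBy, mul_assoc] using hpm₂₁.symm)
  have e₂ : ↑Lm₂⁻¹ * (R * Lp₁) = Lp₁ * R * ↑Lm₂⁻¹ :=
    SemiconjBy.units_inv_symm_left (by simpa [SemiconjBy, mul_assoc] using hpm.symm)
  have e₃ : R₂₁ * ↑Lm₁⁻¹ * ↑Lm₂⁻¹ = ↑Lm₂⁻¹ * ↑Lm₁⁻¹ * R₂₁ := by
    rw [Units.mul_inv_eq_iff_eq_mul, Units.mul_inv_eq_iff_eq_mul]
    simp [mul_assoc, hmm₂₁]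
  calc R * (Lp₁ * ↑Lm₁⁻¹) * R₂₁ * (Lp₂ * ↑Lm₂⁻¹)
      = R * Lp₁ * (↑Lm₁⁻¹ * (R₂₁ * Lp₂)) * ↑Lm₂⁻¹ := by simp only [mul_assoc]
    _ = R * Lp₁ * Lp₂ * (R₂₁ * ↑Lm₁⁻¹ * ↑Lm₂⁻¹) := by rw [e₁]; simp only [mul_assoc]
    _ = Lp₂ * Lp₁ * R * (↑Lm₂⁻¹ * ↑Lm₁⁻¹ * R₂₁) := by rw [hpp, e₃]
    _ = Lp₂ * (↑Lm₂⁻¹ * (R * Lp₁)) * ↑Lm₁⁻¹ * R₂₁ := by rw [e₂]; simp only [mul_assoc]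
    _ = Lp₂ * ↑Lm₂⁻¹ * R * (Lp₁ * ↑Lm₁⁻¹) * R₂₁ := by simp only [mul_assoc]

theorem statement5_general (N : ℕ) (k : Type*) [CommRing k] (q : kˣ)
    (A : Type*) [Ring A] [Algebra k A]
    (Lp Lm LmInv : Matrix (Fin N) (Fin N) A)
    (hL : IsQEPair k N (q : k) ((q⁻¹ : kˣ) : k) A Lp Lm LmInv) :
    leg2 2 0 1 ((Rmat k N (q : k) ((q⁻¹ : kˣ) : k)).map (algebraMap k A))
        * leg1 2 0 (Lp * LmInv)
        * leg2 2 0 1 ((Pmat k N * Rmat k N (q : k) ((q⁻¹ : kˣ) : k) * Pmat k N).map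
            (algebraMap k A))
        * leg1 2 1 (Lp * LmInv)
      = leg1 2 1 (Lp * LmInv)
        * leg2 2 0 1 ((Rmat k N (q : k) ((q⁻¹ : kˣ) : k)).map (algebraMap k A))
        * leg1 2 0 (Lp * LmInv)
        * leg2 2 0 1 ((Pmat k N * Rmat k N (q : k) ((q⁻¹ : kˣ) : k) * Pmat k N).map
            (algebraMap k A)) := by
  obtain ⟨-, -, hLm, hLmInv, -, hpp, hmm, hpm⟩ := hL
  set R := (Rmat k N (q : k) ((q⁻¹ : kˣ) : k)).map (algebraMap k A)
  have hR₂₁ : leg2 2 0 1 ((Pmat k N * Rmat k N (q : k) ((q⁻¹ : kˣ) : k) * Pmat k N).map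
      (algebraMap k A)) = leg2 2 1 0 R := by
    rw [Pmat_mul_mul_Pmat, ← submatrix_map, leg2_submatrix_swap]
  have flip_legs {X Y : Matrix (Fin N) (Fin N) A}
      (h : leg2 2 0 1 R * leg1 2 0 X * leg1 2 1 Y = leg1 2 1 Y * leg1 2 0 X * leg2 2 0 1 R) :
      leg2 2 1 0 R * leg1 2 1 X * leg1 2 0 Y = leg1 2 0 Y * leg1 2 1 X * leg2 2 1 0 R := by
    simpa only [map_mul, permLegs_leg1, permLegs_leg2, Equiv.swap_apply_left,
      Equiv.swap_apply_right] using congrArg (permLegs (Equiv.swap (0 : Fin 2) 1)) h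
  let Lm' (a : Fin 2) : (Matrix (Fin 2 → Fin N) (Fin 2 → Fin N) A)ˣ :=
    ⟨leg1 2 a Lm, leg1 2 a LmInv, by rw [← leg1_mul, hLm, leg1_one],
      by rw [← leg1_mul, hLmInv, leg1_one]⟩
  rw [hR₂₁, leg1_mul, leg1_mul]
  exact reflection_equation_of_rll _ _ _ _ (Lm' 0) (Lm' 1) hpp hpm
    (flip_legs hmm) (flip_legs hpm)

/-- for a quantized-enveloping pair `(L⁺, L⁻)` over a unital
associative `k`-algebra `A`, the matrix `ℒ = L⁺ (L⁻)⁻¹` satisfies the reflection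
equation `R ℒ₁ R₂₁ ℒ₂ = ℒ₂ R ℒ₁ R₂₁` in `End(k^N) ⊗ End(k^N) ⊗ A`, i.e. the
entries of `ℒ` realize the reflection equation algebra `O_h(Mat_N)` inside `A`. -/
theorem statement5 (N : ℕ) (hN : 1 ≤ N) (k : Type*) [CommRing k] (q : kˣ)
    (A : Type*) [Ring A] [Algebra k A]
    (Lp Lm LmInv : Matrix (Fin N) (Fin N) A)
    (hL : IsQEPair k N (q : k) ((q⁻¹ : kˣ) : k) A Lp Lm LmInv) :
    leg2 2 0 1 ((Rmat k N (q : k) ((q⁻¹ : kˣ) : k)).map (algebraMap k A))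
        * leg1 2 0 (Lp * LmInv)
        * leg2 2 0 1 ((Pmat k N * Rmat k N (q : k) ((q⁻¹ : kˣ) : k) * Pmat k N).map
            (algebraMap k A))
        * leg1 2 1 (Lp * LmInv)
      = leg1 2 1 (Lp * LmInv)
        * leg2 2 0 1 ((Rmat k N (q : k) ((q⁻¹ : kˣ) : k)).map (algebraMap k A))
        * leg1 2 0 (Lp * LmInv)
        * leg2 2 0 1 ((Pmat k N * Rmat k N (q : k) ((q⁻¹ : kˣ) : k) * Pmat k N).map
            (algebraMap k A)) :=
  statement5_general N k q A Lp Lm LmInv hL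

end QVA
end

section
/- Let N ≥ 1, k a commutative ring, q ∈ k a unit, a = q − q^{-1}, and B a unital associative k-algebra. Let M(z) = Σ_{r ≥ −1} M_r z^r be a formal series with coefficients M_r ∈ End(k^N) ⊗ B (powers of z bounded below by −1). Interpret R̄(z₁/z₂) and R̄₂₁(z₁/z₂) by the expansion valid for |z₂| < |z₁|: ι R̄(z₁/z₂) = R − a P Σ_{k≥0} z₁^{-k} z₂^{k} and ι R̄₂₁(z₁/z₂) = R₂₁ − a P Σ_{k≥0} z₁^{-k} z₂^{k}. Suppose that, for all integers p and s, the coefficients of z₁^p z₂^s on the two sides of the spectral reflection equation ι R̄(z₁/z₂) · (z₁ M₁(z₁)) · R₂₁ · (z₂ M₂(z₂)) = (z₂ M₂(z₂)) · R · (z₁ M₁(z₁)) · ι R̄₂₁(z₁/z₂) agree (each such coefficient is a finite sum, since z₁ M₁(z₁) and z₂ M₂(z₂) only involve nonnegative powers). Then the residue coefficient M_{−1} satisfies the constant reflection equation R (M_{−1})₁ R₂₁ (M_{−1})₂ = (M_{−1})₂ R (M_{−1})₁ R₂₁ in End(k^N) ⊗ End(k^N) ⊗ B. (This is the core computation in the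 proof of Theorem 4.5 of the paper: a σ-commutative field satisfying condition (4.13) has residues obeying the defining relation of the reflection equation algebra O_h(Mat_N).) -/
open Matrix Kronecker

namespace QVA

/-! Only two coefficients of the spectral equation are needed. At `z₁⁻¹ z₂` every term
containing `M₋₂` vanishes, leaving `a P M₋₁ R₂₁ M₋₁ = a M₋₁ R M₋₁ P`; these are exactly the
correction terms by which the coefficient of `z₁⁰ z₂⁰` differs from the reflection equation
for `M₋₁`. -/

section SpectralReflection

variable {A S : Type*} [Ring A] [SMulZeroClass S A] (R R₂₁ P : A) (a : S) (X Y : ℤ → A)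

/-- Coefficient of `z₁^p z₂^s` in `ιR̄(z₁/z₂) (z₁X₁(z₁)) R₂₁ (z₂Y₂(z₂))`, where `X r` and `Y r` are
the coefficients of `z^r` and `ιR̄(z₁/z₂) = R - a P ∑_{k ≥ 0} z₁^{-k} z₂^k`. -/
noncomputable def spectralReflLhsCoeff (p s : ℤ) : A :=
  R * X (p - 1) * R₂₁ * Y (s - 1)
    - ∑ j ∈ Finset.Icc (0 : ℤ) s, a • (P * X (p + j - 1) * R₂₁ * Y (s - j - 1))

/-- Coefficient of `z₁^p z₂^s` in `(z₂Y₂(z₂)) R (z₁X₁(z₁)) ιR̄₂₁(z₁/z₂)`. -/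
noncomputable def spectralReflRhsCoeff (p s : ℤ) : A :=
  Y (s - 1) * R * X (p - 1) * R₂₁
    - ∑ j ∈ Finset.Icc (0 : ℤ) s, a • (Y (s - j - 1) * R * X (p + j - 1) * P)

variable {R R₂₁ P a X Y}

lemma smul_residue_eq_of_coeff_eq (hX : X (-2) = 0)
    (h : spectralReflLhsCoeff R R₂₁ P a X Y (-1) 1 = spectralReflRhsCoeff R R₂₁ P a X Y (-1) 1) :
    a • (P * X (-1) * R₂₁ * Y (-1)) = a • (Y (-1) * R * X (-1) * P) := by
  have hIcc : Finset.Icc (0 : ℤ) 1 = {0, 1} := rfl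
  simpa [spectralReflLhsCoeff, spectralReflRhsCoeff, hIcc, hX] using h

theorem residue_reflection_of_coeff_eq (hX : X (-2) = 0)
    (h₀ : spectralReflLhsCoeff R R₂₁ P a X Y 0 0 = spectralReflRhsCoeff R R₂₁ P a X Y 0 0)
    (h₁ : spectralReflLhsCoeff R R₂₁ P a X Y (-1) 1 = spectralReflRhsCoeff R R₂₁ P a X Y (-1) 1) :
    R * X (-1) * R₂₁ * Y (-1) = Y (-1) * R * X (-1) * R₂₁ := by
  have hIcc : Finset.Icc (0 : ℤ) 0 = {0} := rfl
  simp only [spectralReflLhsCoeff, spectralReflRhsCoeff, hIcc, Finset.sum_singleton,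
    add_zero, neg_zero, zero_sub] at h₀
  rwa [smul_residue_eq_of_coeff_eq hX h₁, sub_left_inj] at h₀

end SpectralReflection

lemma leg1_zero {A : Type*} [Zero A] {N : ℕ} (n : ℕ) (a : Fin n) :
    leg1 (N := N) n a (0 : Matrix (Fin N) (Fin N) A) = 0 := by
  ext f g
  simp [leg1]

theorem statement10_general (N : ℕ) (k : Type*) [CommRing k] (q : kˣ)
    (B : Type*) [Ring B] [Algebra k B]
    (M : ℤ → Matrix (Fin N) (Fin N) B)
    (hlow : ∀ r : ℤ, r < -1 → M r = 0)
    (h : ∀ p s : ℤ,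
      leg2 2 0 1 ((Rmat k N (q : k) ((q⁻¹ : kˣ) : k)).map (algebraMap k B))
          * leg1 2 0 (M (p - 1))
          * leg2 2 0 1 ((Pmat k N * Rmat k N (q : k) ((q⁻¹ : kˣ) : k) * Pmat k N).map
              (algebraMap k B))
          * leg1 2 1 (M (s - 1))
        - ∑ j ∈ Finset.Icc (0 : ℤ) s,
            algebraMap k B ((q : k) - ((q⁻¹ : kˣ) : k)) •
              (leg2 2 0 1 ((Pmat k N).map (algebraMap k B))
                * leg1 2 0 (M (p + j - 1))
                * leg2 2 0 1 ((Pmat k N * Rmat k N (q : k) ((q⁻¹ : kˣ) : k)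
                    * Pmat k N).map (algebraMap k B))
                * leg1 2 1 (M (s - j - 1)))
      = leg1 2 1 (M (s - 1))
          * leg2 2 0 1 ((Rmat k N (q : k) ((q⁻¹ : kˣ) : k)).map (algebraMap k B))
          * leg1 2 0 (M (p - 1))
          * leg2 2 0 1 ((Pmat k N * Rmat k N (q : k) ((q⁻¹ : kˣ) : k) * Pmat k N).map
              (algebraMap k B))
        - ∑ j ∈ Finset.Icc (0 : ℤ) s,
            algebraMap k B ((q : k) - ((q⁻¹ : kˣ) : k)) •
              (leg1 2 1 (M (s - j - 1))
                * leg2 2 0 1 ((Rmat k N (q : k) ((q⁻¹ : kˣ) : k)).map (algebraMap k B))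
                * leg1 2 0 (M (p + j - 1))
                * leg2 2 0 1 ((Pmat k N).map (algebraMap k B)))) :
    leg2 2 0 1 ((Rmat k N (q : k) ((q⁻¹ : kˣ) : k)).map (algebraMap k B))
        * leg1 2 0 (M (-1))
        * leg2 2 0 1 ((Pmat k N * Rmat k N (q : k) ((q⁻¹ : kˣ) : k) * Pmat k N).map
            (algebraMap k B))
        * leg1 2 1 (M (-1))
      = leg1 2 1 (M (-1))
        * leg2 2 0 1 ((Rmat k N (q : k) ((q⁻¹ : kˣ) : k)).map (algebraMap k B))
        * leg1 2 0 (M (-1))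
        * leg2 2 0 1 ((Pmat k N * Rmat k N (q : k) ((q⁻¹ : kˣ) : k) * Pmat k N).map
            (algebraMap k B)) := by
  have hX : leg1 2 0 (M (-2)) = 0 := by rw [hlow _ (by norm_num), leg1_zero]
  exact residue_reflection_of_coeff_eq (X := fun r => leg1 2 0 (M r))
    (Y := fun r => leg1 2 1 (M r)) hX (h 0 0) (h (-1) 1)

/-- core computation in the proof of Theorem 4.5: let
`M(z) = ∑_{r ≥ -1} M_r z^r` be a formal series with coefficients in
`End(k^N) ⊗ B` (encoded as `M : ℤ → Matrix (Fin N) (Fin N) B` vanishing below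
degree `-1`).  If for all integers `p, s` the coefficients of `z₁^p z₂^s` of the
two sides of the spectral reflection equation
`ιR̄(z₁/z₂) (z₁M₁(z₁)) R₂₁ (z₂M₂(z₂)) = (z₂M₂(z₂)) R (z₁M₁(z₁)) ιR̄₂₁(z₁/z₂)`
agree (with `ιR̄(z₁/z₂) = R − (q−q⁻¹) P ∑_{k≥0} z₁^{-k} z₂^k`, the expansion for
`|z₂| < |z₁|`), then the residue coefficient `M₋₁` satisfies the constant
reflection equation `R (M₋₁)₁ R₂₁ (M₋₁)₂ = (M₋₁)₂ R (M₋₁)₁ R₂₁`. -/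
theorem statement10 (N : ℕ) (hN : 1 ≤ N) (k : Type*) [CommRing k] (q : kˣ)
    (B : Type*) [Ring B] [Algebra k B]
    (M : ℤ → Matrix (Fin N) (Fin N) B)
    (hlow : ∀ r : ℤ, r < -1 → M r = 0)
    (h : ∀ p s : ℤ,
      leg2 2 0 1 ((Rmat k N (q : k) ((q⁻¹ : kˣ) : k)).map (algebraMap k B))
          * leg1 2 0 (M (p - 1))
          * leg2 2 0 1 ((Pmat k N * Rmat k N (q : k) ((q⁻¹ : kˣ) : k) * Pmat k N).map
              (algebraMap k B))
          * leg1 2 1 (M (s - 1))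
        - ∑ j ∈ Finset.Icc (0 : ℤ) s,
            algebraMap k B ((q : k) - ((q⁻¹ : kˣ) : k)) •
              (leg2 2 0 1 ((Pmat k N).map (algebraMap k B))
                * leg1 2 0 (M (p + j - 1))
                * leg2 2 0 1 ((Pmat k N * Rmat k N (q : k) ((q⁻¹ : kˣ) : k)
                    * Pmat k N).map (algebraMap k B))
                * leg1 2 1 (M (s - j - 1)))
      = leg1 2 1 (M (s - 1))
          * leg2 2 0 1 ((Rmat k N (q : k) ((q⁻¹ : kˣ) : k)).map (algebraMap k B))
          * leg1 2 0 (M (p - 1))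
          * leg2 2 0 1 ((Pmat k N * Rmat k N (q : k) ((q⁻¹ : kˣ) : k) * Pmat k N).map
              (algebraMap k B))
        - ∑ j ∈ Finset.Icc (0 : ℤ) s,
            algebraMap k B ((q : k) - ((q⁻¹ : kˣ) : k)) •
              (leg1 2 1 (M (s - j - 1))
                * leg2 2 0 1 ((Rmat k N (q : k) ((q⁻¹ : kˣ) : k)).map (algebraMap k B))
                * leg1 2 0 (M (p + j - 1))
                * leg2 2 0 1 ((Pmat k N).map (algebraMap k B)))) :
    leg2 2 0 1 ((Rmat k N (q : k) ((q⁻¹ : kˣ) : k)).map (algebraMap k B))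
        * leg1 2 0 (M (-1))
        * leg2 2 0 1 ((Pmat k N * Rmat k N (q : k) ((q⁻¹ : kˣ) : k) * Pmat k N).map
            (algebraMap k B))
        * leg1 2 1 (M (-1))
      = leg1 2 1 (M (-1))
        * leg2 2 0 1 ((Rmat k N (q : k) ((q⁻¹ : kˣ) : k)).map (algebraMap k B))
        * leg1 2 0 (M (-1))
        * leg2 2 0 1 ((Pmat k N * Rmat k N (q : k) ((q⁻¹ : kˣ) : k) * Pmat k N).map
            (algebraMap k B)) :=
  statement10_general N k q B M hlow h

end QVA
end

section
/- Let N ≥ 1 be an integer. There exists a unique formal power series G ∈ ℂ[[t]] with constant term 1 such that G(t (1 + N t)^{-1}) = (1 − t²) G(t) in ℂ[[t]], where t(1 + N t)^{-1} ∈ t ℂ[[t]] and G(t(1+Nt)^{-1}) denotes formal composition (substitution). Equivalently, writing g(u) = G(u^{-1}) ∈ 1 + u^{-1} ℂ[[u^{-1}]], g is the unique element of 1 + u^{-1} ℂ[[u^{-1}]] satisfying g(u + N) = g(u)(1 − u^{-2}). -/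
namespace QVA

/-- Formal composition `G(φ)` of power series: when the constant coefficient of
`φ` vanishes, `coeff n (G ∘ φ) = ∑_{d ≤ n} (coeff d G) (coeff n (φ^d))`. -/
noncomputable def psComp (G φ : PowerSeries ℂ) : PowerSeries ℂ :=
  PowerSeries.mk fun n =>
    ∑ d ∈ Finset.range (n + 1), PowerSeries.coeff d G * PowerSeries.coeff n (φ ^ d)

/-!
Write `t(1 + Nt)⁻¹ = X u` with `u = (1 + N X)⁻¹`, so `u(0) = 1` and `u'(0) = -N ≠ 0`. As
`(X u)^d = X^d u^d`, coefficient `k + 2` of `G(X u) = (1 - X²) G` expresses `(k + 1) u'(0) G_{k+1}`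
through `G_0, …, G_k`, while coefficients `0` and `1` hold for every `G`. So the equation is a
course-of-values recursion for the coefficients of `G`, with a unique solution once `G_0 = 1`.
-/

open PowerSeries Finset

section CourseOfValues

variable {α : Type*}

/-- `F k` is meant to read only `f 0, …, f k`; the values it receives beyond `k` are junk
(set to `a`). -/
def courseOfValuesSeq (a : α) (F : ℕ → (ℕ → α) → α) : ℕ → α
  | 0 => a
  | k + 1 => F k fun i => if i ≤ k then courseOfValuesSeq a F i else a
termination_by n => n
decreasing_by omega

theorem existsUnique_courseOfValues (a : α) (F : ℕ → (ℕ → α) → α)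
    (hF : ∀ k f g, (∀ i ≤ k, f i = g i) → F k f = F k g) :
    ∃! f : ℕ → α, f 0 = a ∧ ∀ k, f (k + 1) = F k f := by
  refine ⟨courseOfValuesSeq a F, ⟨by rw [courseOfValuesSeq], fun k => ?_⟩, ?_⟩
  · rw [courseOfValuesSeq]
    exact hF k _ _ fun i hi => if_pos hi
  · rintro f ⟨hf0, hfF⟩
    funext n
    induction n using Nat.strong_induction_on with
    | _ n ih =>
      match n with
      | 0 => rw [hf0, courseOfValuesSeq]
      | k + 1 =>
        rw [hfF, courseOfValuesSeq]
        exact hF k _ _ fun i hi => by rw [if_pos hi, ih i (by omega)]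

end CourseOfValues

theorem coeff_one_inv_of_constantCoeff_eq_one {k : Type*} [Field k] {φ : k⟦X⟧}
    (hφ : constantCoeff φ = 1) : coeff 1 φ⁻¹ = -coeff 1 φ := by
  have h := congrArg (coeff 1) (PowerSeries.mul_inv_cancel φ (by simp [hφ]))
  rw [coeff_one_mul, constantCoeff_inv, hφ] at h
  simp only [inv_one, mul_one, coeff_one, one_ne_zero, if_false] at h
  linear_combination h

section Substitution

variable {u : ℂ⟦X⟧}

theorem coeff_X_mul_pow_self (hu : constantCoeff u = 1) (d : ℕ) :
    coeff d ((X * u) ^ d) = 1 := by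
  rw [mul_pow, coeff_X_pow_mul', if_pos le_rfl, Nat.sub_self, coeff_zero_eq_constantCoeff_apply,
    map_pow, hu, one_pow]

theorem coeff_succ_X_mul_pow (hu : constantCoeff u = 1) (d : ℕ) :
    coeff (d + 1) ((X * u) ^ d) = d * coeff 1 u := by
  rw [mul_pow, coeff_X_pow_mul', if_pos d.le_succ, Nat.add_sub_cancel_left, coeff_one_pow, hu,
    one_pow, mul_one]

theorem coeff_add_two_psComp_X_mul (hu : constantCoeff u = 1) (G : ℂ⟦X⟧) (k : ℕ) :
    coeff (k + 2) (psComp G (X * u)) =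
      ∑ d ∈ range (k + 1), coeff d G * coeff (k + 2) ((X * u) ^ d)
        + (k + 1) * coeff 1 u * coeff (k + 1) G + coeff (k + 2) G := by
  rw [psComp, coeff_mk, sum_range_succ, sum_range_succ, coeff_X_mul_pow_self hu,
    coeff_succ_X_mul_pow hu]
  push_cast
  ring

theorem coeff_add_two_one_sub_X_sq_mul (G : ℂ⟦X⟧) (k : ℕ) :
    coeff (k + 2) ((1 - X ^ 2) * G) = coeff (k + 2) G - coeff k G := by
  rw [sub_mul, one_mul, map_sub, coeff_X_pow_mul', if_pos (by omega), Nat.add_sub_cancel]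

theorem psComp_X_mul_eq_one_sub_X_sq_mul_iff (hu : constantCoeff u = 1) (G : ℂ⟦X⟧) :
    psComp G (X * u) = (1 - X ^ 2) * G ↔
      ∀ k : ℕ, (k + 1) * coeff 1 u * coeff (k + 1) G =
        -(coeff k G + ∑ d ∈ range (k + 1), coeff d G * coeff (k + 2) ((X * u) ^ d)) := by
  rw [PowerSeries.ext_iff]
  constructor
  · intro h k
    have hk := h (k + 2)
    rw [coeff_add_two_psComp_X_mul hu, coeff_add_two_one_sub_X_sq_mul] at hk
    linear_combination hk
  · intro h n
    match n with
    | 0 => simp [psComp]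
    | 1 => simp [psComp, sum_range_succ, hu, sub_mul, coeff_X_pow_mul']
    | k + 2 =>
      rw [coeff_add_two_psComp_X_mul hu, coeff_add_two_one_sub_X_sq_mul]
      linear_combination h k

theorem existsUnique_psComp_X_mul_eq_one_sub_X_sq_mul (hu : constantCoeff u = 1)
    (hu₁ : coeff 1 u ≠ 0) :
    ∃! G : ℂ⟦X⟧, constantCoeff G = 1 ∧ psComp G (X * u) = (1 - X ^ 2) * G := by
  set F : ℕ → (ℕ → ℂ) → ℂ := fun k f =>
    ((k + 1) * coeff 1 u)⁻¹ * -(f k + ∑ d ∈ range (k + 1), f d * coeff (k + 2) ((X * u) ^ d))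
  have hF : ∀ k f g, (∀ i ≤ k, f i = g i) → F k f = F k g := fun k f g hfg => by
    have hsum : ∑ d ∈ range (k + 1), f d * coeff (k + 2) ((X * u) ^ d) =
        ∑ d ∈ range (k + 1), g d * coeff (k + 2) ((X * u) ^ d) :=
      sum_congr rfl fun d hd => by rw [hfg d (Nat.le_of_lt_succ (mem_range.mp hd))]
    simp only [F, hfg k le_rfl, hsum]
  have hcoeff : ∀ G : ℂ⟦X⟧, (constantCoeff G = 1 ∧ psComp G (X * u) = (1 - X ^ 2) * G) ↔
      (coeff 0 G = 1 ∧ ∀ k, coeff (k + 1) G = F k fun n => coeff n G) := fun G => by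
    rw [psComp_X_mul_eq_one_sub_X_sq_mul_iff hu, coeff_zero_eq_constantCoeff_apply]
    refine and_congr_right' (forall_congr' fun k => ?_)
    exact (eq_inv_mul_iff_mul_eq₀ (mul_ne_zero k.cast_add_one_ne_zero hu₁)).symm
  obtain ⟨f, hf, hf_unique⟩ := existsUnique_courseOfValues 1 F hF
  refine ⟨mk f, (hcoeff _).2 (by simpa using hf), fun G hG => ?_⟩
  ext n
  rw [coeff_mk, ← hf_unique (fun n => coeff n G) ((hcoeff G).1 hG)]

end Substitution

/-- there is a unique formal power series `G ∈ ℂ[[t]]` with constant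
term `1` such that `G(t(1 + Nt)⁻¹) = (1 − t²) G(t)`; equivalently,
`g(u) = G(u⁻¹)` is the unique element of `1 + u⁻¹ℂ[[u⁻¹]]` with
`g(u + N) = g(u)(1 − u⁻²)`. -/
theorem statement13 (N : ℕ) (hN : 1 ≤ N) :
    ∃! G : PowerSeries ℂ,
      PowerSeries.constantCoeff G = 1 ∧
      psComp G (PowerSeries.X * ((1 : PowerSeries ℂ)
          + (N : PowerSeries ℂ) * PowerSeries.X)⁻¹)
        = (1 - PowerSeries.X ^ 2) * G := by
  have hconst : constantCoeff (1 + (N : ℂ⟦X⟧) * X) = 1 := by simp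
  have hlinear : coeff 1 (1 + (N : ℂ⟦X⟧) * X) = (N : ℂ) := by simp
  refine existsUnique_psComp_X_mul_eq_one_sub_X_sq_mul (by simp) ?_
  rw [coeff_one_inv_of_constantCoeff_eq_one hconst, hlinear, neg_ne_zero, Nat.cast_ne_zero]
  omega

end QVA
end

section
/- Let N ≥ 1 be an integer and let ℂ(q) be the field of rational functions in one variable q over ℂ. There exists a unique sequence (f_r)_{r≥1} of elements of ℂ(q) such that, for every r ≥ 1, the rational function f_r (q − 1)^{-r} is regular at q = 1 (has no pole at q = 1), and the formal power series f_q(z) = 1 + Σ_{r≥1} f_r z^r (1 − z)^{-r} ∈ ℂ(q)[[z]] satisfies the functional equation f_q(z q^{2N}) = f_q(z) (1 − z q²)(1 − z q^{2N−2})(1 − z)^{-1}(1 − z q^{2N})^{-1} in ℂ(q)[[z]]. -/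
/-!
Put `σ = z/(1 - z)`, so that `f_q = Φ(σ)` with `Φ = 1 + ∑ f_r σ^r`; substitution of `σ` is
injective. Since `q^{2Nn} ≠ 1` for `n ≥ 1`, comparing the coefficients of `z^n` shows that the
functional equation has at most one solution with constant term `1`: this gives uniqueness.

For existence, a Wronskian argument shows that every solution of the Euler equation
`z f' = f · ∑ γ_m z^m`, `γ_m = (1 - q^{2m})(1 - q^{(2N-2)m}) / (q^{2Nm} - 1)`, satisfies the
functional equation: `(q^{2Nm} - 1) γ_m` are the coefficients of the logarithmic derivative of
the multiplier. By Newton's forward-difference formula the Euler equation becomes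
`σ Φ' = Φ · ∑ δ_n σ^n` with `δ_n = (Δ^n γ)(0)`, i.e. `n f_n = ∑_{k<n} f_k δ_{n-k}`. Now
`γ_m = u(q, q^m) / v(q, q^m)` for polynomials with `v(1, 1) = N ≠ 0`, and the shift `t ↦ q t`
is the identity modulo `q - 1`, so `δ_n` is `(q - 1)^n` times a function regular at `q = 1`.
The recursion only divides by integers, hence so is `f_n`.
-/

namespace QVA

/-- A rational function is regular at `q = 1` if it can be written with a
denominator not vanishing at `q = 1`. -/
def RegularAtOne (x : RatFunc ℂ) : Prop :=
  ∃ a b : Polynomial ℂ, Polynomial.eval 1 b ≠ 0 ∧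
    x * algebraMap (Polynomial ℂ) (RatFunc ℂ) b = algebraMap (Polynomial ℂ) (RatFunc ℂ) a

/-- The formal power series `f_q(z) = 1 + ∑_{r ≥ 1} f_r z^r (1 − z)^{-r}`
in `ℂ(q)[[z]]` attached to a sequence `(f_r)_{r ≥ 1}`; the coefficient of `z^n`
only involves `f_1, …, f_n` since `z^r(1 − z)^{-r}` has order `r`. -/
noncomputable def fqSeries (f : {r : ℕ // 1 ≤ r} → RatFunc ℂ) : PowerSeries (RatFunc ℂ) :=
  PowerSeries.mk fun n =>
    (if n = 0 then 1 else 0)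
      + ∑ j ∈ Finset.range n,
          f ⟨j + 1, Nat.succ_le_succ (Nat.zero_le j)⟩
            * PowerSeries.coeff (R := RatFunc ℂ) n
                (PowerSeries.X ^ (j + 1) * ((1 - PowerSeries.X)⁻¹) ^ (j + 1))

section PowerSeriesLemmas

open PowerSeries

variable {K : Type*} [Field K]

theorem inv_one_sub_C_mul_X (c : K) : (1 - C c * X : K⟦X⟧)⁻¹ = mk (c ^ ·) := by
  rw [PowerSeries.inv_eq_iff_mul_eq_one (by simp)]
  ext (_ | n)
  · simp
  · simp [mul_sub, ← mul_assoc, pow_succ]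

theorem inv_one_sub_X : (1 - X : K⟦X⟧)⁻¹ = mk 1 := by
  rw [PowerSeries.inv_eq_iff_mul_eq_one (by simp), mk_one_mul_one_sub_eq_one]

theorem constantCoeff_rescale {R : Type*} [CommSemiring R] (c : R) (F : R⟦X⟧) :
    constantCoeff (rescale c F) = constantCoeff F := by
  rw [← coeff_zero_eq_constantCoeff_apply, coeff_rescale, pow_zero, one_mul,
    coeff_zero_eq_constantCoeff_apply]

theorem X_mul_derivative_rescale (c : K) (F : K⟦X⟧) :
    X * d⁄dX K (rescale c F) = rescale c (X * d⁄dX K F) := by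
  ext (_ | n)
  · simp
  · simp only [coeff_succ_X_mul, coeff_derivative, coeff_rescale]
    ring

theorem coeff_subst_eq_sum {R : Type*} [CommRing R] {S : R⟦X⟧} (hS : constantCoeff S = 0)
    (F : R⟦X⟧) (n : ℕ) :
    coeff n (F.subst S) = ∑ d ∈ Finset.range (n + 1), coeff d F * coeff n (S ^ d) := by
  rw [coeff_subst' (HasSubst.of_constantCoeff_zero' hS)]
  refine finsum_eq_sum_of_support_subset _ fun d hd => ?_
  obtain ⟨T, hT⟩ := pow_dvd_pow_of_dvd (X_dvd_iff.mpr hS) d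
  rw [Function.mem_support, hT, coeff_X_pow_mul'] at hd
  simp only [Finset.coe_range, Set.mem_Iio]
  by_contra hdn
  exact hd (by rw [if_neg (by omega), smul_zero])

theorem constantCoeff_subst_of_constantCoeff_eq_zero {R : Type*} [CommRing R] {S : R⟦X⟧}
    (hS : constantCoeff S = 0) (F : R⟦X⟧) : constantCoeff (F.subst S) = constantCoeff F := by
  rw [← coeff_zero_eq_constantCoeff_apply, coeff_subst_eq_sum hS]
  simp

theorem eq_of_rescale_eq_mul {c : K} (hc : ∀ n, 0 < n → c ^ n ≠ 1) {M F G : K⟦X⟧}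
    (hM : constantCoeff M = 1) (h0 : constantCoeff F = constantCoeff G)
    (hF : rescale c F = F * M) (hG : rescale c G = G * M) : F = G := by
  rw [← sub_eq_zero]
  set H := F - G
  have hH : rescale c H = H * M := by rw [map_sub, hF, hG, sub_mul]
  by_contra hne
  set n := H.order.toNat
  set U := H.divXPowOrder
  have hHU : X ^ n * U = H := X_pow_order_mul_divXPowOrder
  have hU : constantCoeff U ≠ 0 := by rwa [Ne, constantCoeff_divXPowOrder_eq_zero_iff]
  have hn : n ≠ 0 := by
    intro hn
    apply hU
    rw [← one_mul U, ← pow_zero X, ← hn, hHU, map_sub, h0, sub_self]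
  have hUM : C (c ^ n) * rescale c U = U * M := by
    apply mul_left_cancel₀ (pow_ne_zero n X_ne_zero)
    rw [← hHU, map_mul, map_pow, rescale_X, mul_pow, ← map_pow] at hH
    linear_combination hH
  have hlead := congrArg constantCoeff hUM
  rw [map_mul, map_mul, constantCoeff_C, constantCoeff_rescale, hM, mul_one] at hlead
  exact hc n (Nat.pos_of_ne_zero hn) (mul_right_cancel₀ hU (by rw [hlead, one_mul]))

end PowerSeriesLemmas

section EulerEquation

open PowerSeries

variable {K : Type*} [Field K] [CharZero K]

theorem exists_X_mul_derivative_eq_mul {D : K⟦X⟧} (hD : constantCoeff D = 0) :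
    ∃ Φ : K⟦X⟧, constantCoeff Φ = 1 ∧ X * d⁄dX K Φ = Φ * D := by
  set H : K⟦X⟧ := mk fun n => coeff n D / n
  have hH : constantCoeff H = 0 := by simp [H]
  have hXH : X * d⁄dX K H = D := by
    ext (_ | n)
    · simp [hD]
    · rw [coeff_succ_X_mul, coeff_derivative, coeff_mk]
      field_simp
      push_cast
      ring
  refine ⟨(exp K).subst H, ?_, ?_⟩
  · rw [constantCoeff_subst_of_constantCoeff_eq_zero hH, constantCoeff_exp]
  · rw [derivative_subst (HasSubst.of_constantCoeff_zero' hH), derivative_exp, ← hXH]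
    ring

theorem eq_of_X_mul_derivative_mul_eq {Y Z : K⟦X⟧} (hZ : constantCoeff Z ≠ 0)
    (h0 : constantCoeff Y = constantCoeff Z)
    (h : X * d⁄dX K Y * Z = Y * (X * d⁄dX K Z)) : Y = Z := by
  have hZZ : Z * Z⁻¹ = 1 := PowerSeries.mul_inv_cancel Z hZ
  have hwronskian : d⁄dX K Y * Z = Y * d⁄dX K Z :=
    mul_left_cancel₀ X_ne_zero (by linear_combination h)
  have hconst : Y * Z⁻¹ = 1 := by
    apply derivative.ext
    · rw [Derivation.leibniz, derivative_inv', Derivation.map_one_eq_zero, smul_eq_mul,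
        smul_eq_mul]
      linear_combination Z⁻¹ ^ 2 * hwronskian - Z⁻¹ * d⁄dX K Y * hZZ
    · simp [h0, hZ]
  calc Y = Y * Z⁻¹ * Z := by rw [mul_assoc, PowerSeries.inv_mul_cancel Z hZ, mul_one]
    _ = Z := by rw [hconst, one_mul]

theorem coeff_mem_of_X_mul_derivative_eq_mul (R : Subring K)
    (hR : ∀ n : ℕ, 0 < n → (n : K)⁻¹ ∈ R) {Ψ D : K⟦X⟧} (hD0 : constantCoeff D = 0)
    (hD : ∀ n, coeff n D ∈ R) (hΨ0 : constantCoeff Ψ ∈ R) (h : X * d⁄dX K Ψ = Ψ * D)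
    (n : ℕ) : coeff n Ψ ∈ R := by
  induction n using Nat.strong_induction_on with
  | _ n ih =>
    obtain _ | n := n
    · simpa using hΨ0
    have hcoeff := congrArg (coeff (n + 1)) h
    rw [coeff_succ_X_mul, coeff_derivative] at hcoeff
    have hsum : coeff (n + 1) (Ψ * D) ∈ R := by
      rw [coeff_mul]
      refine Subring.sum_mem R fun p hp => ?_
      obtain ⟨i, _ | j⟩ := p
      · simp [hD0]
      · exact R.mul_mem (ih i (by simp at hp; omega)) (hD _)
    have hn : ((n + 1 : ℕ) : K) ≠ 0 := Nat.cast_ne_zero.mpr n.succ_ne_zero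
    convert R.mul_mem (hR (n + 1) n.succ_pos) hsum using 1
    rw [← hcoeff]
    push_cast at hn ⊢
    field_simp

end EulerEquation

section SigmaSubstitution

open PowerSeries

variable {K : Type*} [Field K]

variable (K) in
noncomputable def sigmaSeries : K⟦X⟧ := X * (1 - X)⁻¹

theorem constantCoeff_sigmaSeries : constantCoeff (sigmaSeries K) = 0 := by
  simp [sigmaSeries]

theorem hasSubst_sigmaSeries : HasSubst (sigmaSeries K) :=
  HasSubst.of_constantCoeff_zero' constantCoeff_sigmaSeries

theorem constantCoeff_subst_sigmaSeries (Φ : K⟦X⟧) :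
    constantCoeff (Φ.subst (sigmaSeries K)) = constantCoeff Φ :=
  constantCoeff_subst_of_constantCoeff_eq_zero constantCoeff_sigmaSeries Φ

theorem coeff_succ_sigmaSeries_pow (k j : ℕ) :
    coeff (k + 1) (sigmaSeries K ^ (j + 1)) = k.choose j := by
  rw [sigmaSeries, mul_pow, inv_one_sub_X, mk_one_pow_eq_mk_choose_add, coeff_X_pow_mul',
    coeff_mk]
  by_cases hjk : j ≤ k
  · rw [if_pos (by omega), show j + (k + 1 - (j + 1)) = k by omega]
  · rw [if_neg (by omega), Nat.choose_eq_zero_of_lt (by omega), Nat.cast_zero]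

theorem coeff_succ_subst_sigmaSeries (F : K⟦X⟧) (k : ℕ) :
    coeff (k + 1) (F.subst (sigmaSeries K))
      = ∑ j ∈ Finset.range (k + 1), coeff (j + 1) F * k.choose j := by
  rw [coeff_subst_eq_sum constantCoeff_sigmaSeries, Finset.sum_range_succ']
  simp only [coeff_succ_sigmaSeries_pow, pow_zero, coeff_one, Nat.add_one_ne_zero, if_false,
    mul_zero, add_zero]

/-- Coefficientwise this is Newton's formula `g (k + 1) - g k = ∑ C(k, j) (Δ^{j+1} g) 0`. -/
theorem subst_sigmaSeries_mk_fwdDiff (g : ℕ → K) :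
    (mk fun n => (fwdDiff 1)^[n] g 0).subst (sigmaSeries K) = (1 - X) * mk g := by
  ext (_ | k)
  · simp [coeff_subst_eq_sum constantCoeff_sigmaSeries]
  · have newton := shift_eq_sum_fwdDiff_iter 1 (fwdDiff 1 g) k 0
    simp only [zero_add, smul_eq_mul, mul_one, nsmul_eq_mul,
      ← Function.iterate_succ_apply] at newton
    rw [coeff_succ_subst_sigmaSeries, sub_mul, one_mul, map_sub, coeff_succ_X_mul]
    simpa [fwdDiff, mul_comm] using newton.symm

theorem X_mul_derivative_subst_sigmaSeries (Φ : K⟦X⟧) :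
    X * d⁄dX K (Φ.subst (sigmaSeries K))
      = (1 - X)⁻¹ * (X * d⁄dX K Φ).subst (sigmaSeries K) := by
  have hu : (1 - X : K⟦X⟧) * (1 - X)⁻¹ = 1 := PowerSeries.mul_inv_cancel _ (by simp)
  have hdσ : X * d⁄dX K (sigmaSeries K) = (1 - X)⁻¹ * sigmaSeries K := by
    simp only [sigmaSeries, Derivation.leibniz, derivative_inv', smul_eq_mul, map_sub,
      Derivation.map_one_eq_zero, derivative_X]
    linear_combination (-X * (1 - X : K⟦X⟧)⁻¹) * hu
  rw [derivative_subst hasSubst_sigmaSeries, subst_mul hasSubst_sigmaSeries,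
    subst_X hasSubst_sigmaSeries]
  linear_combination (subst (sigmaSeries K) (d⁄dX K Φ)) * hdσ

theorem X_mul_derivative_subst_sigmaSeries_eq {g : ℕ → K} {Φ : K⟦X⟧}
    (h : X * d⁄dX K Φ = Φ * mk fun n => (fwdDiff 1)^[n] g 0) :
    X * d⁄dX K (Φ.subst (sigmaSeries K)) = Φ.subst (sigmaSeries K) * mk g := by
  have hu : (1 - X : K⟦X⟧)⁻¹ * (1 - X) = 1 := PowerSeries.inv_mul_cancel _ (by simp)
  rw [X_mul_derivative_subst_sigmaSeries, h, subst_mul hasSubst_sigmaSeries,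
    subst_sigmaSeries_mk_fwdDiff]
  linear_combination (Φ.subst (sigmaSeries K) * mk g) * hu

theorem subst_sigmaSeries_injective :
    Function.Injective fun Φ : K⟦X⟧ => Φ.subst (sigmaSeries K) := by
  have h1 : IsUnit (coeff 1 (sigmaSeries K)) := by
    have h := coeff_succ_sigmaSeries_pow (K := K) 0 0
    simp only [zero_add, pow_one, Nat.choose_self, Nat.cast_one] at h
    exact h ▸ isUnit_one
  refine Function.LeftInverse.injective
    (g := fun G : K⟦X⟧ => G.subst ((sigmaSeries K).substInvOfIsUnit h1)) fun Φ => ?_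
  simp only [subst_comp_subst_apply hasSubst_sigmaSeries (HasSubst.substInvOfIsUnit _ h1),
    subst_substInvOfIsUnit_right _ constantCoeff_sigmaSeries h1, X_subst]

end SigmaSubstitution

section FunctionalEquation

open PowerSeries

variable {K : Type*} [Field K]

noncomputable def multiplier (a b : K) : K⟦X⟧ :=
  (1 - C a * X) * (1 - C b * X) * (1 - X)⁻¹ * (1 - C (a * b) * X)⁻¹

theorem constantCoeff_multiplier (a b : K) : constantCoeff (multiplier a b) = 1 := by
  simp [multiplier]

theorem mul_multiplier (G : K⟦X⟧) (a b : K) :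
    G * multiplier a b
      = G * (1 - C a * X) * (1 - C b * X) * (1 - X)⁻¹ * (1 - C (a * b) * X)⁻¹ := by
  simp only [multiplier, mul_assoc]

theorem X_mul_derivative_multiplier (a b : K) :
    X * d⁄dX K (multiplier a b) = multiplier a b * mk fun n => (1 - a ^ n) * (1 - b ^ n) := by
  have hlog : (mk fun n => (1 - a ^ n) * (1 - b ^ n) : K⟦X⟧)
      = (1 - X)⁻¹ - (1 - C a * X)⁻¹ - (1 - C b * X)⁻¹ + (1 - C (a * b) * X)⁻¹ := by
    ext n
    simp only [inv_one_sub_X, inv_one_sub_C_mul_X, map_add, map_sub, coeff_mk, Pi.one_apply]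
    ring
  have hinv (c : K) : (1 - C c * X) * (1 - C c * X)⁻¹ = 1 :=
    PowerSeries.mul_inv_cancel _ (by simp)
  have hX : (1 - X : K⟦X⟧) * (1 - X)⁻¹ = 1 := PowerSeries.mul_inv_cancel _ (by simp)
  rw [hlog, multiplier]
  simp only [Derivation.leibniz, derivative_inv', smul_eq_mul, map_sub, derivative_C,
    derivative_X, Derivation.map_one_eq_zero]
  set A := (1 - C a * X : K⟦X⟧)
  set B := (1 - C b * X : K⟦X⟧)
  set D := (1 - C (a * b) * X : K⟦X⟧)
  linear_combination (B * (1 - X)⁻¹ * D⁻¹) * hinv a + (A * (1 - X)⁻¹ * D⁻¹) * hinv b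
    - (A * B * (1 - X)⁻¹ * D⁻¹) * hX - (A * B * (1 - X)⁻¹ * D⁻¹) * hinv (a * b)

/-- At `m = 0` this is `0 / 0 = 0`, the value the Euler equation below needs. -/
noncomputable def gammaSeq (a b : K) (m : ℕ) : K :=
  (1 - a ^ m) * (1 - b ^ m) / ((a * b) ^ m - 1)

theorem sub_one_mul_gammaSeq {a b : K} (hab : ∀ n, 0 < n → (a * b) ^ n ≠ 1) (m : ℕ) :
    ((a * b) ^ m - 1) * gammaSeq a b m = (1 - a ^ m) * (1 - b ^ m) := by
  rcases Nat.eq_zero_or_pos m with rfl | hm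
  · simp [gammaSeq]
  · exact mul_div_cancel₀ _ (sub_ne_zero.mpr (hab m hm))

theorem rescale_eq_mul_multiplier [CharZero K] {a b : K} (hab : ∀ n, 0 < n → (a * b) ^ n ≠ 1)
    {G : K⟦X⟧} (hG0 : constantCoeff G ≠ 0) (hG : X * d⁄dX K G = G * mk (gammaSeq a b)) :
    rescale (a * b) G = G * multiplier a b := by
  have hrescale : rescale (a * b) (mk (gammaSeq a b))
      = mk (gammaSeq a b) + mk fun n => (1 - a ^ n) * (1 - b ^ n) := by
    ext n
    simp only [coeff_rescale, map_add, coeff_mk]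
    linear_combination sub_one_mul_gammaSeq hab n
  have hM := X_mul_derivative_multiplier a b
  refine eq_of_X_mul_derivative_mul_eq (by simp [hG0, constantCoeff_multiplier]) ?_ ?_
  · rw [constantCoeff_rescale, map_mul, constantCoeff_multiplier, mul_one]
  · rw [X_mul_derivative_rescale, hG, map_mul, hrescale, Derivation.leibniz, smul_eq_mul,
      smul_eq_mul]
    linear_combination -(rescale (a * b) G) * (G * hM + multiplier a b * hG)

theorem gammaSeq_eq_gammaSeq_pow (a b : K) (m : ℕ) :
    gammaSeq a b m = gammaSeq (a ^ m) (b ^ m) 1 := by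
  simp [gammaSeq, mul_pow]

theorem gammaSeq_sq_one {N : ℕ} (hN : 1 ≤ N) (t : K) :
    gammaSeq (t ^ 2) (t ^ (2 * N - 2)) 1
      = (t ^ (2 * N - 2) - 1) / ∑ i ∈ Finset.range N, t ^ (2 * i) := by
  have hden :
      t ^ 2 * t ^ (2 * N - 2) - 1 = (t ^ 2 - 1) * ∑ i ∈ Finset.range N, t ^ (2 * i) := by
    rw [← pow_add, show 2 + (2 * N - 2) = 2 * N by omega]
    simp only [pow_mul]
    exact (geom_sum_mul (t ^ 2) N).symm.trans (mul_comm _ _)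
  by_cases ht : t ^ 2 = 1
  · have ht' : t ^ (2 * N - 2) = 1 := by
      rw [show 2 * N - 2 = 2 * (N - 1) by omega, pow_mul, ht, one_pow]
    simp [gammaSeq, ht, ht']
  · rw [gammaSeq, pow_one, pow_one, pow_one, hden, ← neg_sub (t ^ 2), neg_mul, ← mul_neg,
      mul_div_mul_left _ _ (sub_ne_zero.mpr ht), neg_sub]

end FunctionalEquation

section Regularity

open Polynomial

def regularAtOneSubring : Subring (RatFunc ℂ) where
  carrier := {x | RegularAtOne x}
  one_mem' := ⟨1, 1, by simp⟩
  zero_mem' := ⟨0, 1, by simp⟩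
  mul_mem' := by
    rintro x y ⟨a, b, hb, hab⟩ ⟨c, d, hd, hcd⟩
    refine ⟨a * c, b * d, by simp [hb, hd], ?_⟩
    rw [map_mul, map_mul, ← hab, ← hcd]
    ring
  add_mem' := by
    rintro x y ⟨a, b, hb, hab⟩ ⟨c, d, hd, hcd⟩
    refine ⟨a * d + c * b, b * d, by simp [hb, hd], ?_⟩
    rw [map_add, map_mul, map_mul, map_mul, ← hab, ← hcd]
    ring
  neg_mem' := by
    rintro x ⟨a, b, hb, hab⟩
    exact ⟨-a, b, hb, by rw [map_neg, ← hab, neg_mul]⟩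

theorem regularAtOne_div {a b : ℂ[X]} (hb : b.eval 1 ≠ 0) :
    RegularAtOne (algebraMap ℂ[X] (RatFunc ℂ) a / algebraMap ℂ[X] (RatFunc ℂ) b) :=
  ⟨a, b, hb, div_mul_cancel₀ _ (RatFunc.algebraMap_ne_zero (by rintro rfl; simp at hb))⟩

theorem natCast_inv_mem_regularAtOneSubring {n : ℕ} (hn : 0 < n) :
    (n : RatFunc ℂ)⁻¹ ∈ regularAtOneSubring := by
  have h := regularAtOne_div (a := 1) (b := (n : ℂ[X])) (by simp [hn.ne'])
  rwa [map_one, map_natCast, one_div] at h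

theorem X_pow_ne_one {k : ℕ} (hk : k ≠ 0) : (RatFunc.X : RatFunc ℂ) ^ k ≠ 1 := by
  rw [← RatFunc.algebraMap_X, ← map_pow, ← map_one (algebraMap ℂ[X] (RatFunc ℂ)), Ne,
    (IsFractionRing.injective ℂ[X] (RatFunc ℂ)).eq_iff]
  intro h
  simpa [hk] using congrArg natDegree h

theorem X_sub_one_ne_zero : (RatFunc.X : RatFunc ℂ) - 1 ≠ 0 := by
  rw [← RatFunc.algebraMap_X, ← map_one (algebraMap ℂ[X] (RatFunc ℂ)), ← map_sub]
  exact RatFunc.algebraMap_ne_zero (X_sub_C_ne_zero 1)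

end Regularity

section FiniteDifferences

open Polynomial

theorem eval_one_eval (P : ℂ[X][X]) (x : ℂ[X]) :
    (P.eval x).eval 1 = (P.map (evalRingHom 1)).eval (x.eval 1) := by
  rw [eval_map, ← coe_evalRingHom, Polynomial.eval, hom_eval₂, RingHom.comp_id]

theorem eval_one_eval_X_pow (P : ℂ[X][X]) (k : ℕ) :
    (P.eval (X ^ k)).eval 1 = (P.map (evalRingHom 1)).eval 1 := by
  rw [eval_one_eval, eval_pow, eval_X, one_pow]

noncomputable def qShift (P : ℂ[X][X]) : ℂ[X][X] := P.comp (C X * X)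

theorem eval_X_pow_qShift (P : ℂ[X][X]) (m : ℕ) :
    (qShift P).eval (X ^ m) = P.eval (X ^ (m + 1)) := by
  simp [qShift, eval_comp, pow_succ']

theorem map_qShift (P : ℂ[X][X]) : (qShift P).map (evalRingHom 1) = P.map (evalRingHom 1) := by
  simp [qShift, Polynomial.map_comp]

theorem C_X_sub_one_dvd_of_map_eq_zero {P : ℂ[X][X]} (h : P.map (evalRingHom 1) = 0) :
    C (X - 1) ∣ P := by
  rw [C_dvd_iff_dvd_coeff]
  intro i
  rw [← C_1, dvd_iff_isRoot, IsRoot, ← coe_evalRingHom, ← coeff_map, h, coeff_zero]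

/-- Reading `u v : ℂ[X][X]` as polynomials `u(q, t), v(q, t)` in `t` over `ℂ[q]`, this is the
sequence `m ↦ u(q, q^m) / v(q, q^m)`. -/
noncomputable def polyQuotSeq (u v : ℂ[X][X]) (m : ℕ) : RatFunc ℂ :=
  algebraMap ℂ[X] (RatFunc ℂ) (u.eval (X ^ m))
    / algebraMap ℂ[X] (RatFunc ℂ) (v.eval (X ^ m))

theorem regularAtOne_polyQuotSeq (u : ℂ[X][X]) {v : ℂ[X][X]}
    (hv : (v.map (evalRingHom 1)).eval 1 ≠ 0) (m : ℕ) : RegularAtOne (polyQuotSeq u v m) :=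
  regularAtOne_div (by rwa [eval_one_eval_X_pow])

theorem fwdDiff_polyQuotSeq (u : ℂ[X][X]) {v : ℂ[X][X]}
    (hv : (v.map (evalRingHom 1)).eval 1 ≠ 0) :
    ∃ w, fwdDiff 1 (polyQuotSeq u v)
      = (RatFunc.X - 1 : RatFunc ℂ) • polyQuotSeq w (qShift v * v) := by
  obtain ⟨w, hw⟩ := C_X_sub_one_dvd_of_map_eq_zero (P := qShift u * v - u * qShift v)
    (by rw [Polynomial.map_sub, Polynomial.map_mul, Polynomial.map_mul, map_qShift, map_qShift,
      mul_comm, sub_self])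
  refine ⟨w, funext fun m => ?_⟩
  have hden (k : ℕ) : algebraMap ℂ[X] (RatFunc ℂ) (v.eval (X ^ k)) ≠ 0 :=
    RatFunc.algebraMap_ne_zero fun h0 => hv (by rw [← eval_one_eval_X_pow v k, h0, eval_zero])
  have hnum := congrArg (fun P => algebraMap ℂ[X] (RatFunc ℂ) (P.eval (X ^ m))) hw
  simp only [eval_sub, eval_mul, eval_X_pow_qShift, eval_C, eval_one, map_sub, map_mul, map_one,
    RatFunc.algebraMap_X] at hnum
  simp only [fwdDiff, polyQuotSeq, Pi.smul_apply, smul_eq_mul, eval_mul, eval_X_pow_qShift,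
    map_mul]
  field_simp [hden m, hden (m + 1)]
  linear_combination hnum

theorem fwdDiff_iter_polyQuotSeq (n : ℕ) :
    ∀ (u : ℂ[X][X]) {v : ℂ[X][X]}, (v.map (evalRingHom 1)).eval 1 ≠ 0 →
      ∃ u' v', (v'.map (evalRingHom 1)).eval 1 ≠ 0 ∧
        (fwdDiff 1)^[n] (polyQuotSeq u v)
          = (RatFunc.X - 1 : RatFunc ℂ) ^ n • polyQuotSeq u' v' := by
  induction n with
  | zero => exact fun u v hv => ⟨u, v, hv, by simp⟩
  | succ n ih =>
    intro u v hv
    obtain ⟨w, hw⟩ := fwdDiff_polyQuotSeq u hv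
    obtain ⟨u', v', hv', h⟩ := ih w (v := qShift v * v)
      (by rw [Polynomial.map_mul, map_qShift, eval_mul]; exact mul_ne_zero hv hv)
    refine ⟨u', v', hv', ?_⟩
    rw [Function.iterate_succ_apply, hw, fwdDiff_iter_const_smul, h, smul_smul, pow_succ']

theorem regularAtOne_fwdDiff_iter_polyQuotSeq (u : ℂ[X][X]) {v : ℂ[X][X]}
    (hv : (v.map (evalRingHom 1)).eval 1 ≠ 0) (n : ℕ) :
    RegularAtOne
      (((RatFunc.X - 1 : RatFunc ℂ) ^ n)⁻¹ * (fwdDiff 1)^[n] (polyQuotSeq u v) 0) := by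
  obtain ⟨u', v', hv', h⟩ := fwdDiff_iter_polyQuotSeq n u hv
  rw [h, Pi.smul_apply, smul_eq_mul, inv_mul_cancel_left₀ (pow_ne_zero _ X_sub_one_ne_zero)]
  exact regularAtOne_polyQuotSeq u' hv' 0

theorem gammaSeq_eq_polyQuotSeq {N : ℕ} (hN : 1 ≤ N) :
    gammaSeq (RatFunc.X ^ 2 : RatFunc ℂ) (RatFunc.X ^ (2 * N - 2))
      = polyQuotSeq (X ^ (2 * N - 2) - 1) (∑ i ∈ Finset.range N, X ^ (2 * i)) := by
  funext m
  have hpow (k : ℕ) : (RatFunc.X ^ k : RatFunc ℂ) ^ m = (RatFunc.X ^ m) ^ k := by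
    rw [← pow_mul, ← pow_mul, mul_comm]
  rw [gammaSeq_eq_gammaSeq_pow, hpow, hpow, gammaSeq_sq_one hN]
  simp [polyQuotSeq, eval_finsetSum, RatFunc.algebraMap_X]

theorem regularAtOne_fwdDiff_iter_gammaSeq {N : ℕ} (hN : 1 ≤ N) (n : ℕ) :
    RegularAtOne (((RatFunc.X - 1 : RatFunc ℂ) ^ n)⁻¹
      * (fwdDiff 1)^[n] (gammaSeq (RatFunc.X ^ 2) (RatFunc.X ^ (2 * N - 2))) 0) := by
  rw [gammaSeq_eq_polyQuotSeq hN]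
  refine regularAtOne_fwdDiff_iter_polyQuotSeq _ ?_ n
  simp [Polynomial.map_sum, eval_finsetSum]
  omega

end FiniteDifferences

section FqSeries

open PowerSeries

noncomputable def generatingSeries (f : {r : ℕ // 1 ≤ r} → RatFunc ℂ) :
    (RatFunc ℂ)⟦X⟧ :=
  mk fun n => if h : 1 ≤ n then f ⟨n, h⟩ else 1

theorem generatingSeries_coeff {Φ : (RatFunc ℂ)⟦X⟧} (hΦ : constantCoeff Φ = 1) :
    generatingSeries (fun r => coeff r Φ) = Φ := by
  ext (_ | n)
  · simp [generatingSeries, hΦ]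
  · simp [generatingSeries]

theorem fqSeries_eq_subst (f : {r : ℕ // 1 ≤ r} → RatFunc ℂ) :
    fqSeries f = (generatingSeries f).subst (sigmaSeries (RatFunc ℂ)) := by
  ext n
  rw [fqSeries, coeff_mk, coeff_subst_eq_sum constantCoeff_sigmaSeries, Finset.sum_range_succ',
    add_comm]
  simp [generatingSeries, sigmaSeries, mul_pow, coeff_one]

theorem constantCoeff_fqSeries (f : {r : ℕ // 1 ≤ r} → RatFunc ℂ) :
    constantCoeff (fqSeries f) = 1 := by
  rw [fqSeries_eq_subst, constantCoeff_subst_sigmaSeries, ← coeff_zero_eq_constantCoeff_apply,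
    generatingSeries, coeff_mk, dif_neg (by omega)]

theorem fqSeries_injective : Function.Injective fqSeries := by
  intro f g h
  have hfg : generatingSeries f = generatingSeries g :=
    subst_sigmaSeries_injective (by simpa only [fqSeries_eq_subst] using h)
  funext r
  simpa [generatingSeries, r.2] using congrArg (coeff r) hfg

/-- Rescaling by `(q - 1)⁻¹` turns divisibility of the `n`-th coefficient by `(q - 1)^n` into
regularity of the coefficients. -/
theorem exists_regular_solution {N : ℕ} (hN : 1 ≤ N) :
    ∃ Φ : (RatFunc ℂ)⟦X⟧, constantCoeff Φ = 1 ∧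
      (∀ r, RegularAtOne (coeff r Φ * ((RatFunc.X - 1 : RatFunc ℂ) ^ r)⁻¹)) ∧
      X * d⁄dX (RatFunc ℂ) Φ = Φ * mk fun n =>
        (fwdDiff 1)^[n] (gammaSeq (RatFunc.X ^ 2) (RatFunc.X ^ (2 * N - 2))) 0 := by
  set D : (RatFunc ℂ)⟦X⟧ :=
    mk fun n => (fwdDiff 1)^[n] (gammaSeq (RatFunc.X ^ 2) (RatFunc.X ^ (2 * N - 2))) 0
  have hD0 : constantCoeff D = 0 := by simp [D, gammaSeq]
  obtain ⟨Φ, hΦ0, hΦ⟩ := exists_X_mul_derivative_eq_mul hD0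
  refine ⟨Φ, hΦ0, fun r => ?_, hΦ⟩
  set c := (RatFunc.X - 1 : RatFunc ℂ)⁻¹
  have hreg := coeff_mem_of_X_mul_derivative_eq_mul regularAtOneSubring
    (fun n hn => natCast_inv_mem_regularAtOneSubring hn) (Ψ := rescale c Φ) (D := rescale c D)
    (by rw [constantCoeff_rescale, hD0])
    (fun n => by
      rw [coeff_rescale, inv_pow, coeff_mk]
      exact regularAtOne_fwdDiff_iter_gammaSeq hN n)
    (by rw [constantCoeff_rescale, hΦ0]; exact regularAtOneSubring.one_mem)
    (by rw [X_mul_derivative_rescale, hΦ, map_mul]) r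
  rwa [coeff_rescale, inv_pow, mul_comm] at hreg

end FqSeries

/-- there is a unique sequence `(f_r)_{r ≥ 1}` of rational functions
in `q` such that each `f_r (q − 1)^{-r}` is regular at `q = 1` and the series
`f_q(z) = 1 + ∑_{r ≥ 1} f_r z^r (1 − z)^{-r}` satisfies
`f_q(z q^{2N}) = f_q(z) (1 − zq²)(1 − zq^{2N−2})(1 − z)⁻¹(1 − zq^{2N})⁻¹`. -/
theorem statement14 (N : ℕ) (hN : 1 ≤ N) :
    ∃! f : {r : ℕ // 1 ≤ r} → RatFunc ℂ,
      (∀ r : {r : ℕ // 1 ≤ r},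
          RegularAtOne (f r * ((RatFunc.X - 1 : RatFunc ℂ) ^ (r : ℕ))⁻¹)) ∧
      PowerSeries.rescale ((RatFunc.X : RatFunc ℂ) ^ (2 * N)) (fqSeries f)
        = fqSeries f
            * (1 - PowerSeries.C (R := RatFunc ℂ) ((RatFunc.X : RatFunc ℂ) ^ 2) * PowerSeries.X)
            * (1 - PowerSeries.C (R := RatFunc ℂ) ((RatFunc.X : RatFunc ℂ) ^ (2 * N - 2))
                * PowerSeries.X)
            * ((1 - PowerSeries.X)⁻¹)
            * ((1 - PowerSeries.C (R := RatFunc ℂ) ((RatFunc.X : RatFunc ℂ) ^ (2 * N))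
                * PowerSeries.X)⁻¹) := by
  have hab : (RatFunc.X ^ 2 * RatFunc.X ^ (2 * N - 2) : RatFunc ℂ) = RatFunc.X ^ (2 * N) := by
    rw [← pow_add]; congr 1; omega
  have hpow (n : ℕ) (hn : 0 < n) :
      ((RatFunc.X : RatFunc ℂ) ^ 2 * RatFunc.X ^ (2 * N - 2)) ^ n ≠ 1 := by
    rw [hab, ← pow_mul]; exact X_pow_ne_one (by positivity)
  simp only [← hab, ← mul_multiplier]
  obtain ⟨Φ, hΦ0, hreg, hΦ⟩ := exists_regular_solution hN
  have hfe := rescale_eq_mul_multiplier hpow (by rw [constantCoeff_subst_sigmaSeries, hΦ0]; simp)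
    (X_mul_derivative_subst_sigmaSeries_eq hΦ)
  rw [← generatingSeries_coeff hΦ0, ← fqSeries_eq_subst] at hfe
  refine ⟨fun r => PowerSeries.coeff r Φ, ⟨fun r => hreg r, hfe⟩, ?_⟩
  rintro f ⟨-, hf⟩
  exact fqSeries_injective (eq_of_rescale_eq_mul hpow (constantCoeff_multiplier _ _)
    (by rw [constantCoeff_fqSeries, constantCoeff_fqSeries]) hf hfe)

end QVA
end
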